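/- arXiv:1601.05445 — 6 statements merged into one kernel-verified Lean document; each statement's English description precedes it below -/
import Mathlib

section
/- Suppose ε < 1/100, ℓ is a positive integer, B is a C*-algebra, φ : M_ℓ(ℂ) → B is an ε-*-homomorphism with ‖φ(x)‖ ≤ 1 for every x in the closed unit ball of M_ℓ(ℂ), and x ∈ M_ℓ(ℂ) satisfies ‖x‖ = 1 and ‖φ(x)‖ ≤ 1 − 2√ε. Let s : M_ℓ(ℂ) → M_ℓ(ℂ) be the map s(a) = a*a. Then there exists n ∈ ℕ such that ‖φ(s^{(n)}(x))‖ ≤ 2√ε, where s^{(n)} denotes the n-fold iterate of s. -/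
/-- `φ : A → B` (not assumed linear or continuous) is an `ε`-*-homomorphism. -/
def IsApproxStarHom {A B : Type*}
    [NonUnitalNormedRing A] [StarRing A] [Module ℂ A]
    [NonUnitalNormedRing B] [StarRing B] [Module ℂ B]
    (ε : ℝ) (φ : A → B) : Prop :=
  (∀ x y : A, ‖x‖ ≤ 1 → ‖y‖ ≤ 1 → ‖φ (x + y) - φ x - φ y‖ ≤ ε) ∧
  (∀ (x : A) (l : ℂ), ‖x‖ ≤ 1 → ‖l‖ ≤ 1 → ‖φ (l • x) - l • φ x‖ ≤ ε) ∧
  (∀ x y : A, ‖x‖ ≤ 1 → ‖y‖ ≤ 1 → ‖φ (x * y) - φ x * φ y‖ ≤ ε) ∧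
  (∀ x : A, ‖x‖ ≤ 1 → ‖φ (star x) - star (φ x)‖ ≤ ε) ∧
  (∀ x : A, ‖x‖ ≤ 1 → ‖φ x‖ ≤ 1 + ε)

universe u

set_option maxHeartbeats 1000000
set_option synthInstance.maxHeartbeats 400000

/-- `M_ℓ(ℂ)` with the operator norm, realized as the algebra of (automatically bounded)
operators on the `ℓ`-dimensional complex Hilbert space. -/
abbrev MatrixAlg (ℓ : ℕ) : Type :=
  EuclideanSpace ℂ (Fin ℓ) →L[ℂ] EuclideanSpace ℂ (Fin ℓ)

/-- If `ε < 1/100`, `φ : M_ℓ(ℂ) → B` is an `ε`-*-homomorphism with `‖φ‖ ≤ 1`, and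
`‖x‖ = 1` with `‖φ(x)‖ ≤ 1 - 2√ε`, then some iterate of `s(a) = a* a` applied to `x`
has image under `φ` of norm at most `2√ε`. -/
theorem exists_iterate_small_image (ε : ℝ) (hε0 : 0 < ε) (hε : ε < 1 / 100)
    (ℓ : ℕ) (hℓ : 0 < ℓ) (B : Type u)
    [NonUnitalNormedRing B] [StarRing B] [CStarRing B] [NormedSpace ℂ B]
    [IsScalarTower ℂ B B] [SMulCommClass ℂ B B] [StarModule ℂ B] [CompleteSpace B]
    (φ : MatrixAlg ℓ → B) (hφ : IsApproxStarHom ε φ)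
    (hcontr : ∀ x : MatrixAlg ℓ, ‖x‖ ≤ 1 → ‖φ x‖ ≤ 1)
    (x : MatrixAlg ℓ) (hx : ‖x‖ = 1) (hφx : ‖φ x‖ ≤ 1 - 2 * Real.sqrt ε) :
    ∃ n : ℕ, ‖φ ((fun a : MatrixAlg ℓ => star a * a)^[n] x)‖ ≤ 2 * Real.sqrt ε := by

  set s : MatrixAlg ℓ → MatrixAlg ℓ := fun a => star a * a with hs
  obtain ⟨hadd, hsmul, hmul, hstar, hbd⟩ := hφ
  set e := Real.sqrt ε with he
  have he0 : 0 < e := Real.sqrt_pos.mpr hε0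
  have he2 : e * e = ε := Real.mul_self_sqrt hε0.le
  have he1 : e < 1 / 10 := by
    have h1 : e < Real.sqrt (1 / 100) := Real.sqrt_lt_sqrt hε0.le hε
    have : Real.sqrt (1 / 100) = 1 / 10 := by
      rw [show (1 / 100 : ℝ) = (1 / 10) ^ 2 by norm_num, Real.sqrt_sq (by norm_num)]
    linarith
  have hnorm : ∀ n, ‖s^[n] x‖ = 1 := by
    intro n
    induction n with
    | zero => simpa using hx
    | succ n ih =>
      rw [Function.iterate_succ_apply']
      have : ‖s (s^[n] x)‖ = ‖s^[n] x‖ * ‖s^[n] x‖ := ContinuousLinearMap.norm_adjoint_comp_self _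
      rw [this, ih]; ring
  have hkey : ∀ n, ‖φ (s^[n + 1] x)‖ ≤
      ‖φ (s^[n] x)‖ * ‖φ (s^[n] x)‖ + ε * ‖φ (s^[n] x)‖ + ε := by
    intro n
    set y := s^[n] x with hy
    have hy1 : ‖y‖ ≤ 1 := (hnorm n).le
    have hsy1 : ‖star y‖ ≤ 1 := by
      rw [ContinuousLinearMap.star_eq_adjoint, LinearIsometryEquiv.norm_map]; exact hy1
    have h1 : ‖φ (star y * y) - φ (star y) * φ y‖ ≤ ε := hmul _ _ hsy1 hy1
    have h2 : ‖φ (star y) - star (φ y)‖ ≤ ε := hstar _ hy1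
    have h3 : ‖φ (star y)‖ ≤ ‖φ y‖ + ε := by
      calc ‖φ (star y)‖ ≤ ‖star (φ y)‖ + ‖φ (star y) - star (φ y)‖ := norm_le_insert' _ _
        _ ≤ ‖φ y‖ + ε := by rw [norm_star]; linarith
    have h4 : ‖φ (star y) * φ y‖ ≤ (‖φ y‖ + ε) * ‖φ y‖ :=
      le_trans (norm_mul_le _ _) (mul_le_mul_of_nonneg_right h3 (norm_nonneg _))
    have h5 : ‖φ (star y * y)‖ ≤ ‖φ (star y) * φ y‖ + ‖φ (star y * y) - φ (star y) * φ y‖ :=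
      norm_le_insert' _ _
    have h6 : s^[n + 1] x = star y * y := by
      rw [Function.iterate_succ_apply', hy]
    rw [h6]
    nlinarith [norm_nonneg (φ y)]
  by_contra hcon
  push_neg at hcon
  have hdecr : ∀ n : ℕ, ‖φ (s^[n] x)‖ ≤ 1 - 2 * e - n * e := by
    intro n
    induction n with
    | zero => simpa using hφx
    | succ n ih =>
      have hlow := hcon n
      have hub1 : ‖φ (s^[n] x)‖ ≤ 1 := hcontr _ (hnorm n).le
      have hub : ‖φ (s^[n] x)‖ ≤ 1 - 2 * e := by
        have : (n : ℝ) * e ≥ 0 := mul_nonneg n.cast_nonneg he0.le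
        linarith
      have hk := hkey n
      have hcast : ((n + 1 : ℕ) : ℝ) = (n : ℝ) + 1 := by push_cast; ring
      rw [hcast]
      have hfact : (‖φ (s^[n] x)‖ - 2 * e) * (1 - 2 * e - ‖φ (s^[n] x)‖) ≥ 0 :=
        mul_nonneg (by linarith) (by linarith)
      nlinarith [norm_nonneg (φ (s^[n] x)), mul_nonneg n.cast_nonneg he0.le]
  obtain ⟨n, hn⟩ := exists_nat_gt (1 / e)
  have hn' : 1 < (n : ℝ) * e := by
    rw [div_lt_iff₀ he0] at hn
    linarith
  have h1 := hdecr n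
  have h2 := hcon n
  linarith
end

section
/- Suppose A is a separable unital complex Banach algebra, G is a compact topological group (with its Borel σ-algebra), and ρ : G → A is a Borel-measurable map such that every ρ(u) is invertible and, for all u, v ∈ G, ‖ρ(u)⁻¹‖ ≤ κ and ‖ρ(uv) − ρ(u)ρ(v)‖ ≤ ε, where κ, ε are positive constants with ε < κ⁻². Then there is a Borel-measurable map ρ̃ : G → A such that every ρ̃(u) is invertible and: (1) for all u ∈ G, ‖ρ̃(u) − ρ(u)‖ ≤ κε; (2) for all u ∈ G, ‖ρ̃(u)⁻¹‖ ≤ κ/(1 − κ²ε); and (3) for all u, v ∈ G, ‖ρ̃(uv) − ρ̃(u)ρ̃(v)‖ ≤ 2κ²ε². -/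
/-!
Put `f u w = ρ (u * w) * ρ(w)⁻¹` (`translateMulInverse`) and let `ρ' u = ∫ f u w dw`
(`averageMap`) for the normalised Haar measure. Every `f u w` lies within `κ ε` of `ρ u`, which
gives the first estimate, and perturbing the inverse of `ρ u` gives invertibility of `ρ' u` with
the second. The integrands satisfy the cocycle identity `f (u * v) t = f u (v * t) * f v t`, and
by left invariance `∫ f u (v * t) dt = ρ' u`, so
`ρ' (u * v) - ρ' u * ρ' v = ∫ (f u (v * t) - ρ' u) * (f v t - ρ v) dt`,
the integral of a product of two `O(κ ε)` factors. `G` need not be metrisable, so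
`(u, w) ↦ ρ (u * w)` need not be jointly measurable; measurability of `ρ'` comes instead from its
continuity, since left translation is continuous in `L¹`.
-/

open MeasureTheory

universe u v

section BanachAlgebra

variable {A : Type*} [NormedRing A] [CompleteSpace A]

theorem measurable_ringInverse [MeasurableSpace A] [BorelSpace A] :
    Measurable (Ring.inverse : A → A) := by
  classical
  have hinv : ContinuousOn (Ring.inverse : A → A) {x | IsUnit x} := by
    rintro _ ⟨x, rfl⟩
    exact (NormedRing.inverse_continuousAt x).continuousWithinAt
  have : (Ring.inverse : A → A) = {x : A | IsUnit x}.piecewise Ring.inverse 0 := by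
    ext x
    by_cases hx : IsUnit x
    · simp [hx]
    · simp [hx, Ring.inverse_non_unit]
  rw [this]
  exact hinv.measurable_piecewise continuousOn_const Units.isOpen.measurableSet

theorem IsUnit.of_norm_sub_le {a b : A} (ha : IsUnit a) {κ δ : ℝ}
    (hκ : ‖Ring.inverse a‖ ≤ κ) (hδ : ‖b - a‖ ≤ δ) (h : κ * δ < 1) : IsUnit b := by
  have hsmall : ‖Ring.inverse a * (a - b)‖ < 1 :=
    calc ‖Ring.inverse a * (a - b)‖ ≤ ‖Ring.inverse a‖ * ‖b - a‖ := by
          rw [norm_sub_rev b]; exact norm_mul_le _ _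
      _ ≤ κ * δ := mul_le_mul hκ hδ (norm_nonneg _) ((norm_nonneg _).trans hκ)
      _ < 1 := h
  have hb : b = a * (1 - Ring.inverse a * (a - b)) := by
    rw [mul_sub, mul_one, ← mul_assoc, Ring.mul_inverse_cancel a ha, one_mul, sub_sub_cancel]
  rw [hb]
  exact ha.mul (Units.oneSub _ hsmall).isUnit

theorem norm_ringInverse_le_of_norm_sub_le {a b : A} (ha : IsUnit a) {κ δ : ℝ}
    (hκ : ‖Ring.inverse a‖ ≤ κ) (hδ : ‖b - a‖ ≤ δ) (h : κ * δ < 1) :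
    ‖Ring.inverse b‖ ≤ κ / (1 - κ * δ) := by
  have hb := ha.of_norm_sub_le hκ hδ h
  have hκ₀ : 0 ≤ κ := (norm_nonneg _).trans hκ
  have hid : Ring.inverse b = Ring.inverse a + Ring.inverse a * (a - b) * Ring.inverse b := by
    rw [mul_sub, sub_mul, Ring.inverse_mul_cancel a ha, one_mul, mul_assoc,
      Ring.mul_inverse_cancel b hb, mul_one, add_sub_cancel]
  have hle : ‖Ring.inverse b‖ ≤ κ + κ * δ * ‖Ring.inverse b‖ :=
    calc ‖Ring.inverse b‖ = ‖Ring.inverse a + Ring.inverse a * (a - b) * Ring.inverse b‖ :=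
          congrArg norm hid
      _ ≤ ‖Ring.inverse a‖ + ‖Ring.inverse a‖ * ‖a - b‖ * ‖Ring.inverse b‖ :=
          (norm_add_le _ _).trans (add_le_add_right norm_mul₃_le _)
      _ ≤ κ + κ * δ * ‖Ring.inverse b‖ := by rw [norm_sub_rev]; gcongr
  rw [le_div_iff₀ (by linarith)]
  linarith

end BanachAlgebra

section ProbabilityIntegral

variable {α : Type*} [MeasurableSpace α] {μ : Measure α}

theorem integrable_of_forall_norm_sub_le {E : Type*} [NormedAddCommGroup E] [IsFiniteMeasure μ]
    {f : α → E} {c : E} {M : ℝ} (hf : AEStronglyMeasurable f μ) (h : ∀ x, ‖f x - c‖ ≤ M) :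
    Integrable f μ :=
  .of_bound hf (‖c‖ + M) (.of_forall fun x =>
    (norm_le_norm_add_norm_sub' (f x) c).trans (add_le_add_right (h x) _))

variable [IsProbabilityMeasure μ]

theorem norm_integral_le_of_forall_norm_le {E : Type*} [NormedAddCommGroup E] [NormedSpace ℝ E]
    {f : α → E} {M : ℝ} (h : ∀ x, ‖f x‖ ≤ M) : ‖∫ x, f x ∂μ‖ ≤ M := by
  simpa using norm_integral_le_of_norm_le_const (μ := μ) (.of_forall h)

theorem integral_sub_const_of_integrable {E : Type*} [NormedAddCommGroup E] [NormedSpace ℝ E]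
    [CompleteSpace E] {f : α → E} (hf : Integrable f μ) (c : E) :
    ∫ x, (f x - c) ∂μ = ∫ x, f x ∂μ - c := by
  rw [integral_sub hf (integrable_const c), integral_const, probReal_univ, one_smul]

theorem norm_integral_sub_le_of_forall_norm_sub_le {E : Type*} [NormedAddCommGroup E]
    [NormedSpace ℝ E] [CompleteSpace E] {f : α → E} {c : E} {M : ℝ} (hf : AEStronglyMeasurable f μ)
    (h : ∀ x, ‖f x - c‖ ≤ M) : ‖∫ x, f x ∂μ - c‖ ≤ M := by
  rw [← integral_sub_const_of_integrable (integrable_of_forall_norm_sub_le hf h)]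
  exact norm_integral_le_of_forall_norm_le h

theorem norm_integral_mul_sub_le {A : Type*} [NormedRing A] [NormedAlgebra ℝ A] [CompleteSpace A]
    {F H : α → A} {a b : A} {δF δH : ℝ} (hFm : AEStronglyMeasurable F μ)
    (hHm : AEStronglyMeasurable H μ) (hF : ∀ x, ‖F x - a‖ ≤ δF) (hH : ∀ x, ‖H x - b‖ ≤ δH)
    (hFa : ∫ x, F x ∂μ = a) :
    ‖∫ x, F x * H x ∂μ - a * ∫ x, H x ∂μ‖ ≤ δF * δH := by
  have hFi := integrable_of_forall_norm_sub_le hFm hF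
  have hHi := integrable_of_forall_norm_sub_le hHm hH
  have hFai : Integrable (fun x => F x - a) μ := hFi.sub (integrable_const a)
  have hFa₀ : ∫ x, (F x - a) ∂μ = 0 := by rw [integral_sub_const_of_integrable hFi, hFa, sub_self]
  have hprod : Integrable (fun x => (F x - a) * (H x - b)) μ :=
    hFai.mul_bdd (hHm.sub aestronglyMeasurable_const) (.of_forall hH)
  have hdecomp : ∫ x, F x * H x ∂μ - a * ∫ x, H x ∂μ = ∫ x, (F x - a) * (H x - b) ∂μ := by
    have hFH : Integrable (fun x => F x * H x) μ :=
      hFi.mul_bdd hHm (.of_forall fun x => (norm_le_norm_add_norm_sub' (H x) b).trans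
        (add_le_add_right (hH x) _))
    rw [← integral_const_mul_of_integrable hHi, ← integral_sub hFH (hHi.const_mul a)]
    calc ∫ x, (F x * H x - a * H x) ∂μ
        = ∫ x, ((F x - a) * (H x - b) + (F x - a) * b) ∂μ := by congr 1; ext x; noncomm_ring
      _ = ∫ x, (F x - a) * (H x - b) ∂μ + (∫ x, (F x - a) ∂μ) * b := by
        rw [integral_add hprod (hFai.mul_const b), integral_mul_const_of_integrable hFai]
      _ = ∫ x, (F x - a) * (H x - b) ∂μ := by rw [hFa₀, zero_mul, add_zero]
  rw [hdecomp]
  exact norm_integral_le_of_forall_norm_le fun x =>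
    (norm_mul_le _ _).trans
      (mul_le_mul (hF x) (hH x) (norm_nonneg _) ((norm_nonneg _).trans (hF x)))

end ProbabilityIntegral

open scoped NNReal in
theorem continuous_integral_comp_mul_left_mul {G : Type*} [Group G] [TopologicalSpace G]
    [IsTopologicalGroup G] [MeasurableSpace G] [BorelSpace G] {μ : Measure G} [IsFiniteMeasure μ]
    [μ.IsMulLeftInvariant] [μ.InnerRegularCompactLTTop] {A : Type*} [NormedRing A]
    [NormedAlgebra ℝ A] [CompleteSpace A] {g h : G → A} (hg : MemLp g 1 μ)
    (hh : AEStronglyMeasurable h μ) {C : ℝ≥0} (hC : ∀ w, ‖h w‖ ≤ C) :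
    Continuous fun u => ∫ w, g (u * w) * h w ∂μ := by
  have hmp (u : G) : MeasurePreserving (ContinuousMap.mulLeft u) μ μ :=
    measurePreserving_mul_left μ u
  let T (u : G) : Lp A 1 μ := Lp.compMeasurePreserving _ (hmp u) (hg.toLp g)
  have hT : Continuous T := continuous_iff_continuousAt.2 fun u =>
    continuousAt_const.compMeasurePreservingLp
      (ContinuousMap.continuous_of_continuous_uncurry _ continuous_mul).continuousAt hmp
      ENNReal.one_ne_top
  let Φ (f : Lp A 1 μ) : A := ∫ w, f w * h w ∂μ
  have hΦ : LipschitzWith C Φ := by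
    refine LipschitzWith.of_dist_le_mul fun f f' => ?_
    have hint (f : Lp A 1 μ) : Integrable (fun w => f w * h w) μ :=
      (L1.integrable_coeFn f).mul_bdd hh (.of_forall hC)
    rw [dist_eq_norm, dist_eq_norm, L1.norm_eq_integral_norm, ← integral_const_mul,
      ← integral_sub (hint f) (hint f')]
    refine norm_integral_le_of_norm_le ((L1.integrable_coeFn _).norm.const_mul _) ?_
    filter_upwards [Lp.coeFn_sub f f'] with w hw
    rw [← sub_mul, hw, Pi.sub_apply, mul_comm (C : ℝ)]
    exact (norm_mul_le _ _).trans (mul_le_mul_of_nonneg_left (hC w) (norm_nonneg _))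
  have hΦT : (fun u => ∫ w, g (u * w) * h w ∂μ) = Φ ∘ T := by
    ext u
    refine integral_congr_ae ?_
    filter_upwards [Lp.coeFn_compMeasurePreserving (hg.toLp g) (hmp u),
      (hmp u).quasiMeasurePreserving.ae_eq_comp hg.coeFn_toLp] with w hw hw'
    rw [hw, hw']
    rfl
  rw [hΦT]
  exact hΦ.continuous.comp hT

section ApproxHom

variable {G : Type*} [Group G] {A : Type*} [NormedRing A]

structure IsApproxHom (κ ε : ℝ) (ρ : G → A) : Prop where
  isUnit : ∀ u, IsUnit (ρ u)
  norm_inverse_le : ∀ u, ‖Ring.inverse (ρ u)‖ ≤ κ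
  norm_map_mul_sub_le : ∀ u v, ‖ρ (u * v) - ρ u * ρ v‖ ≤ ε

noncomputable def translateMulInverse (ρ : G → A) (u w : G) : A :=
  ρ (u * w) * Ring.inverse (ρ w)

theorem translateMulInverse_mul {ρ : G → A} (hρ : ∀ u, IsUnit (ρ u)) (u v t : G) :
    translateMulInverse ρ (u * v) t =
      translateMulInverse ρ u (v * t) * translateMulInverse ρ v t := by
  simp only [translateMulInverse, mul_assoc, ← mul_assoc (Ring.inverse (ρ (v * t))),
    Ring.inverse_mul_cancel _ (hρ _), one_mul]

theorem measurable_translateMulInverse [MeasurableSpace G] [MeasurableMul G] [CompleteSpace A]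
    [MeasurableSpace A] [BorelSpace A] [SecondCountableTopology A] {ρ : G → A}
    (hm : Measurable ρ) (u : G) : Measurable (translateMulInverse ρ u) :=
  (hm.comp (measurable_const_mul u)).mul (measurable_ringInverse.comp hm)

namespace IsApproxHom

variable {κ ε : ℝ} {ρ : G → A}

theorem norm_translateMulInverse_sub_le (hρ : IsApproxHom κ ε ρ) (u w : G) :
    ‖translateMulInverse ρ u w - ρ u‖ ≤ κ * ε := by
  have hε : 0 ≤ ε := (norm_nonneg _).trans (hρ.norm_map_mul_sub_le u w)
  have hdiff : translateMulInverse ρ u w - ρ u = (ρ (u * w) - ρ u * ρ w) * Ring.inverse (ρ w) := by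
    rw [translateMulInverse, sub_mul, mul_assoc, Ring.mul_inverse_cancel _ (hρ.isUnit w), mul_one]
  rw [hdiff, mul_comm κ]
  exact (norm_mul_le _ _).trans
    (mul_le_mul (hρ.norm_map_mul_sub_le u w) (hρ.norm_inverse_le w) (norm_nonneg _) hε)

theorem norm_le (hρ : IsApproxHom κ ε ρ) (u : G) : ‖ρ u‖ ≤ κ * (‖ρ 1‖ + ε) := by
  have hκ : 0 ≤ κ := (norm_nonneg _).trans (hρ.norm_inverse_le 1)
  calc ‖ρ u‖ ≤ ‖translateMulInverse ρ u u⁻¹‖ + ‖ρ u - translateMulInverse ρ u u⁻¹‖ :=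
        norm_le_norm_add_norm_sub' _ _
    _ ≤ ‖ρ 1‖ * κ + κ * ε := by
        rw [norm_sub_rev]
        refine add_le_add ?_ (hρ.norm_translateMulInverse_sub_le u u⁻¹)
        rw [translateMulInverse, mul_inv_cancel]
        exact (norm_mul_le _ _).trans
          (mul_le_mul_of_nonneg_left (hρ.norm_inverse_le _) (norm_nonneg _))
    _ = κ * (‖ρ 1‖ + ε) := by ring

end IsApproxHom

end ApproxHom

section Average

variable {G : Type*} [Group G] [MeasurableSpace G] {A : Type*} [NormedRing A] [NormedAlgebra ℝ A]

noncomputable def averageMap (μ : Measure G) (ρ : G → A) (u : G) : A :=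
  ∫ w, translateMulInverse ρ u w ∂μ

variable [CompleteSpace A] [MeasurableSpace A] [BorelSpace A] [SecondCountableTopology A]
  [MeasurableMul G] {μ : Measure G} [IsProbabilityMeasure μ] {κ ε : ℝ} {ρ : G → A}

namespace IsApproxHom

theorem norm_averageMap_sub_le (hρ : IsApproxHom κ ε ρ) (hm : Measurable ρ) (u : G) :
    ‖averageMap μ ρ u - ρ u‖ ≤ κ * ε :=
  norm_integral_sub_le_of_forall_norm_sub_le
    (measurable_translateMulInverse hm u).aestronglyMeasurable
    (hρ.norm_translateMulInverse_sub_le u)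

theorem norm_averageMap_mul_sub_le [μ.IsMulLeftInvariant] (hρ : IsApproxHom κ ε ρ)
    (hm : Measurable ρ) (u v : G) :
    ‖averageMap μ ρ (u * v) - averageMap μ ρ u * averageMap μ ρ v‖ ≤ 2 * κ ^ 2 * ε ^ 2 := by
  have hosc : ∀ t, ‖translateMulInverse ρ u (v * t) - averageMap μ ρ u‖ ≤ 2 * (κ * ε) := by
    intro t
    calc ‖translateMulInverse ρ u (v * t) - averageMap μ ρ u‖
        ≤ ‖translateMulInverse ρ u (v * t) - ρ u‖ + ‖ρ u - averageMap μ ρ u‖ :=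
          norm_sub_le_norm_sub_add_norm_sub _ _ _
      _ ≤ κ * ε + κ * ε := by
          rw [norm_sub_rev (ρ u)]
          exact add_le_add (hρ.norm_translateMulInverse_sub_le _ _) (hρ.norm_averageMap_sub_le hm u)
      _ = 2 * (κ * ε) := by ring
  have hcocycle : averageMap μ ρ (u * v) =
      ∫ t, translateMulInverse ρ u (v * t) * translateMulInverse ρ v t ∂μ := by
    simp only [averageMap, translateMulInverse_mul hρ.isUnit]
  calc ‖averageMap μ ρ (u * v) - averageMap μ ρ u * averageMap μ ρ v‖ ≤ 2 * (κ * ε) * (κ * ε) := by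
        rw [hcocycle]
        exact norm_integral_mul_sub_le
          ((measurable_translateMulInverse hm u).comp (measurable_const_mul v)).aestronglyMeasurable
          (measurable_translateMulInverse hm v).aestronglyMeasurable hosc
          (hρ.norm_translateMulInverse_sub_le v) (integral_mul_left_eq_self _ v)
    _ = 2 * κ ^ 2 * ε ^ 2 := by ring

end IsApproxHom

end Average

section Continuity

variable {G : Type*} [Group G] [TopologicalSpace G] [IsTopologicalGroup G] [MeasurableSpace G]
  [BorelSpace G] {A : Type*} [NormedRing A] [NormedAlgebra ℝ A] [CompleteSpace A]
  [MeasurableSpace A] [BorelSpace A] [SecondCountableTopology A]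

theorem IsApproxHom.continuous_averageMap {μ : Measure G} [IsFiniteMeasure μ]
    [μ.IsMulLeftInvariant] [μ.InnerRegularCompactLTTop] {κ ε : ℝ} {ρ : G → A}
    (hρ : IsApproxHom κ ε ρ) (hm : Measurable ρ) : Continuous (averageMap μ ρ) :=
  continuous_integral_comp_mul_left_mul (C := κ.toNNReal)
    (.of_bound hm.aestronglyMeasurable _ (.of_forall hρ.norm_le))
    (measurable_ringInverse.comp hm).aestronglyMeasurable
    fun w => (hρ.norm_inverse_le w).trans κ.le_coe_toNNReal

end Continuity

theorem approximate_multiplicativity_improvement_general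
    {G : Type u} {A : Type v}
    [Group G] [TopologicalSpace G] [IsTopologicalGroup G] [CompactSpace G]
    [MeasurableSpace G] [BorelSpace G]
    [NormedRing A] [NormedAlgebra ℂ A] [CompleteSpace A]
    [TopologicalSpace.SeparableSpace A] [MeasurableSpace A] [BorelSpace A]
    (κ ε : ℝ) (hεκ : ε < κ⁻¹ ^ 2)
    (ρ : G → A) (hmeas : Measurable ρ) (hinv : ∀ u : G, IsUnit (ρ u))
    (hbound : ∀ u : G, ‖Ring.inverse (ρ u)‖ ≤ κ)
    (hmul : ∀ u v : G, ‖ρ (u * v) - ρ u * ρ v‖ ≤ ε) :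
    ∃ ρ' : G → A, Measurable ρ' ∧ (∀ u : G, IsUnit (ρ' u)) ∧
      (∀ u : G, ‖ρ' u - ρ u‖ ≤ κ * ε) ∧
      (∀ u : G, ‖Ring.inverse (ρ' u)‖ ≤ κ / (1 - κ ^ 2 * ε)) ∧
      (∀ u v : G, ‖ρ' (u * v) - ρ' u * ρ' v‖ ≤ 2 * κ ^ 2 * ε ^ 2) := by
  have : SecondCountableTopology A := UniformSpace.secondCountable_of_separable A
  let μ : Measure G := Measure.haarMeasure ⊤
  have : IsProbabilityMeasure μ :=
    ⟨by rw [← TopologicalSpace.PositiveCompacts.coe_top, Measure.haarMeasure_self]⟩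
  have hρ : IsApproxHom κ ε ρ := ⟨hinv, hbound, hmul⟩
  have hsmall : κ * (κ * ε) < 1 := by
    rcases eq_or_ne κ 0 with rfl | hκ
    · norm_num
    · calc κ * (κ * ε) = κ ^ 2 * ε := by ring
        _ < κ ^ 2 * κ⁻¹ ^ 2 := by gcongr
        _ = 1 := by rw [← mul_pow, mul_inv_cancel₀ hκ, one_pow]
  have hclose (u : G) : ‖averageMap μ ρ u - ρ u‖ ≤ κ * ε := hρ.norm_averageMap_sub_le hmeas u
  refine ⟨averageMap μ ρ, (hρ.continuous_averageMap hmeas).measurable,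
    fun u => (hinv u).of_norm_sub_le (hbound u) (hclose u) hsmall, hclose, fun u => ?_,
    hρ.norm_averageMap_mul_sub_le hmeas⟩
  simpa only [← mul_assoc, ← sq] using
    norm_ringInverse_le_of_norm_sub_le (hinv u) (hbound u) (hclose u) hsmall

/-- Averaging an approximately multiplicative Borel map from a compact group into the
invertible elements of a separable Banach algebra yields a Borel map which is much
closer to being multiplicative. -/
theorem approximate_multiplicativity_improvement
    {G : Type u} {A : Type v}
    [Group G] [TopologicalSpace G] [IsTopologicalGroup G] [CompactSpace G] [T2Space G]
    [MeasurableSpace G] [BorelSpace G]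
    [NormedRing A] [NormedAlgebra ℂ A] [CompleteSpace A]
    [TopologicalSpace.SeparableSpace A] [MeasurableSpace A] [BorelSpace A]
    (κ ε : ℝ) (hκ : 0 < κ) (hε : 0 < ε) (hεκ : ε < κ⁻¹ ^ 2)
    (ρ : G → A) (hmeas : Measurable ρ) (hinv : ∀ u : G, IsUnit (ρ u))
    (hbound : ∀ u : G, ‖Ring.inverse (ρ u)‖ ≤ κ)
    (hmul : ∀ u v : G, ‖ρ (u * v) - ρ u * ρ v‖ ≤ ε) :
    ∃ ρ' : G → A, Measurable ρ' ∧ (∀ u : G, IsUnit (ρ' u)) ∧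
      (∀ u : G, ‖ρ' u - ρ u‖ ≤ κ * ε) ∧
      (∀ u : G, ‖Ring.inverse (ρ' u)‖ ≤ κ / (1 - κ ^ 2 * ε)) ∧
      (∀ u v : G, ‖ρ' (u * v) - ρ' u * ρ' v‖ ≤ 2 * κ ^ 2 * ε ^ 2) :=
  approximate_multiplicativity_improvement_general κ ε hεκ ρ hmeas hinv hbound hmul
end

section
/- Suppose that for every ε > 0 there is δ > 0 such that whenever A is a unital AF algebra and φ : A → A is a δ-*-isomorphism, there is a *-isomorphism ψ : A → A with ‖φ(x) − ψ(x)‖ < ε for all x in the closed unit ball of A. Then for every ε > 0 there is δ > 0 such that whenever A is a unital AF algebra, H is a complex Hilbert space, and A₁, A₂ are C*-subalgebras of B(H) each *-isomorphic to A with d_KK(A₁, A₂) < δ, there is a *-isomorphism φ : A₁ → A₂ with ‖φ(x) − x‖ < ε for all x in the closed unit ball of A₁. -/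
/-- An `ε`-*-isomorphism: an `ε`-isometric, `ε`-surjective `ε`-*-homomorphism. -/
def IsApproxStarIso {A B : Type*}
    [NonUnitalNormedRing A] [StarRing A] [Module ℂ A]
    [NonUnitalNormedRing B] [StarRing B] [Module ℂ B]
    (ε : ℝ) (φ : A → B) : Prop :=
  IsApproxStarHom ε φ ∧
  (∀ x : A, ‖x‖ = 1 → ‖φ x‖ ∈ Set.Icc (1 - ε) (1 + ε)) ∧
  (∀ b : B, ‖b‖ ≤ 1 → ∃ a : A, ‖φ a - b‖ ≤ ε)

/-- A unital C*-algebra is AF if it admits a directed family of finite-dimensional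
unital *-subalgebras whose union is dense. -/
def IsAFAlgebra (A : Type*) [NormedRing A] [StarRing A] [CStarRing A]
    [NormedAlgebra ℂ A] [StarModule ℂ A] [CompleteSpace A] : Prop :=
  ∃ 𝒮 : Set (StarSubalgebra ℂ A), 𝒮.Nonempty ∧ DirectedOn (· ≤ ·) 𝒮 ∧
    (∀ S ∈ 𝒮, FiniteDimensional ℂ S) ∧ Dense (⋃ S ∈ 𝒮, (S : Set A))

/-- The Kadison–Kastler distance between two subsets of `B(H)`. -/
noncomputable def dKK {H : Type*} [NormedAddCommGroup H] [InnerProductSpace ℂ H]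
    [CompleteSpace H] (A B : Set (H →L[ℂ] H)) : ℝ :=
  max
    (⨆ x : {x : H →L[ℂ] H // x ∈ A ∧ ‖x‖ = 1},
      ⨅ y : {y : H →L[ℂ] H // y ∈ B ∧ ‖y‖ = 1}, ‖(x : H →L[ℂ] H) - (y : H →L[ℂ] H)‖)
    (⨆ y : {y : H →L[ℂ] H // y ∈ B ∧ ‖y‖ = 1},
      ⨅ x : {x : H →L[ℂ] H // x ∈ A ∧ ‖x‖ = 1}, ‖(x : H →L[ℂ] H) - (y : H →L[ℂ] H)‖)

universe u

/-! Through the *-isomorphisms `A ≃ A₁` and `A ≃ A₂`, which are isometric because `A₁` and `A₂`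
are closed, `d_KK(A₁, A₂) < δ` gives every `a : A` a partner `g a` of the same norm whose image in
`A₂` lies within `δ ‖a‖` of the image of `a` in `A₁`. Each defect of `g` (additivity,
homogeneity, multiplicativity, star, surjectivity) is a sum of at most three such partner errors,
so `g` is a `4δ`-*-isomorphism of `A`. The hypothesis corrects `g` to a *-automorphism `ψ`, and
`A₁ ≃ A ≃[ψ] A ≃ A₂` moves the unit ball by less than `ε/2 + δ`. -/

lemma norm_sub_sub_le {E : Type*} [SeminormedAddCommGroup E] (a b c : E) :
    ‖a - b - c‖ ≤ ‖a‖ + ‖b‖ + ‖c‖ :=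
  (norm_sub_le _ _).trans (by gcongr; exact norm_sub_le _ _)

section NearIsometricEmbeddings

variable {A B E : Type*} [NonUnitalNormedRing A] [StarRing A] [Module ℂ A]
  [NonUnitalNormedRing B] [StarRing B] [Module ℂ B]
  [NonUnitalNormedRing E] [StarRing E] [NormedStarGroup E] [NormedSpace ℂ E]
  {ι₁ : A →⋆ₙₐ[ℂ] E} {ι₂ : B →⋆ₙₐ[ℂ] E} {g : A → B} {δ ε : ℝ}

theorem isApproxStarHom_of_near (h₁ : ∀ a, ‖ι₁ a‖ = ‖a‖) (h₂ : ∀ b, ‖ι₂ b‖ = ‖b‖)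
    (hδ : 0 ≤ δ) (hε : 4 * δ ≤ ε) (hg_norm : ∀ a, ‖g a‖ = ‖a‖)
    (hg_near : ∀ a, ‖ι₂ (g a) - ι₁ a‖ ≤ δ * ‖a‖) :
    IsApproxStarHom ε g := by
  set e : A → E := fun a => ι₂ (g a) - ι₁ a
  have hι₂g : ∀ a, ι₂ (g a) = ι₁ a + e a := fun a => by simp [e]
  refine ⟨fun x y hx hy => ?_, fun x l hx hl => ?_, fun x y hx hy => ?_, fun x hx => ?_,
    fun x hx => by linarith [hg_norm x]⟩
  · calc ‖g (x + y) - g x - g y‖ = ‖e (x + y) - e x - e y‖ := by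
          rw [← h₂, map_sub, map_sub, hι₂g, hι₂g, hι₂g, map_add]; congr 1; abel
      _ ≤ ‖e (x + y)‖ + ‖e x‖ + ‖e y‖ := norm_sub_sub_le _ _ _
      _ ≤ δ * ‖x + y‖ + δ * ‖x‖ + δ * ‖y‖ := by gcongr <;> apply hg_near
      _ ≤ ε := by nlinarith [norm_add_le x y]
  · have hlx : ‖l • x‖ ≤ 1 := by
      rw [← h₁, map_smul, norm_smul, h₁]; exact mul_le_one₀ hl (norm_nonneg x) hx
    calc ‖g (l • x) - l • g x‖ = ‖e (l • x) - l • e x‖ := by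
          rw [← h₂, map_sub, map_smul, hι₂g, hι₂g, map_smul, smul_add]; congr 1; abel
      _ ≤ ‖e (l • x)‖ + ‖l‖ * ‖e x‖ := by rw [← norm_smul]; exact norm_sub_le _ _
      _ ≤ δ * ‖l • x‖ + 1 * (δ * ‖x‖) := by gcongr <;> apply hg_near
      _ ≤ ε := by nlinarith
  · have hxy : ‖x * y‖ ≤ 1 := (norm_mul_le x y).trans (mul_le_one₀ hx (norm_nonneg y) hy)
    calc ‖g (x * y) - g x * g y‖ = ‖e (x * y) - ι₁ x * e y - e x * ι₂ (g y)‖ := by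
          rw [← h₂, map_sub, map_mul, hι₂g (x * y), hι₂g x, map_mul, hι₂g y]; congr 1; noncomm_ring
      _ ≤ ‖e (x * y)‖ + ‖ι₁ x‖ * ‖e y‖ + ‖e x‖ * ‖ι₂ (g y)‖ := by
          refine (norm_sub_sub_le _ _ _).trans ?_; gcongr <;> exact norm_mul_le _ _
      _ ≤ δ * ‖x * y‖ + 1 * (δ * ‖y‖) + δ * ‖x‖ * 1 := by
          rw [h₁, h₂, hg_norm]; gcongr <;> apply hg_near
      _ ≤ ε := by nlinarith
  · have hsx : ‖star x‖ ≤ 1 := by rwa [← h₁, map_star, norm_star, h₁]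
    calc ‖g (star x) - star (g x)‖ = ‖e (star x) - star (e x)‖ := by
          rw [← h₂, map_sub, map_star, hι₂g, hι₂g, map_star, star_add]; congr 1; abel
      _ ≤ ‖e (star x)‖ + ‖e x‖ := by rw [← norm_star (e x)]; exact norm_sub_le _ _
      _ ≤ δ * ‖star x‖ + δ * ‖x‖ := by gcongr <;> apply hg_near
      _ ≤ ε := by nlinarith

theorem isApproxStarIso_of_near (h₁ : ∀ a, ‖ι₁ a‖ = ‖a‖) (h₂ : ∀ b, ‖ι₂ b‖ = ‖b‖)
    (hδ : 0 ≤ δ) (hε : 4 * δ ≤ ε) (hg_norm : ∀ a, ‖g a‖ = ‖a‖)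
    (hg_near : ∀ a, ‖ι₂ (g a) - ι₁ a‖ ≤ δ * ‖a‖)
    (hg_surj : ∀ b, ∃ a, ‖a‖ = ‖b‖ ∧ ‖ι₁ a - ι₂ b‖ ≤ δ * ‖b‖) :
    IsApproxStarIso ε g := by
  refine ⟨isApproxStarHom_of_near h₁ h₂ hδ hε hg_norm hg_near,
    fun x hx => by rw [hg_norm, hx]; constructor <;> linarith, fun b hb => ?_⟩
  obtain ⟨a, ha, hab⟩ := hg_surj b
  refine ⟨a, ?_⟩
  calc ‖g a - b‖ = ‖(ι₂ (g a) - ι₁ a) + (ι₁ a - ι₂ b)‖ := by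
        rw [← h₂, map_sub, sub_add_sub_cancel]
    _ ≤ δ * ‖a‖ + δ * ‖b‖ := (norm_add_le _ _).trans (add_le_add (hg_near a) hab)
    _ ≤ ε := by rw [ha]; nlinarith

end NearIsometricEmbeddings

section KadisonKastler

variable {H : Type*} [NormedAddCommGroup H] [InnerProductSpace ℂ H] [CompleteSpace H]

lemma dKK_comm (A B : Set (H →L[ℂ] H)) : dKK A B = dKK B A := by
  simp only [dKK, norm_sub_rev (E := H →L[ℂ] H)]
  exact max_comm _ _

lemma exists_norm_eq_one_sub_lt_of_dKK_lt {A B : Set (H →L[ℂ] H)} {δ : ℝ}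
    (hB : ∃ y ∈ B, ‖y‖ = 1) (h : dKK A B < δ) {x : H →L[ℂ] H} (hx : x ∈ A) (hx1 : ‖x‖ = 1) :
    ∃ y ∈ B, ‖y‖ = 1 ∧ ‖x - y‖ < δ := by
  obtain ⟨y₀, hy₀, hy₀1⟩ := hB
  have : Nonempty {y : H →L[ℂ] H // y ∈ B ∧ ‖y‖ = 1} := ⟨⟨y₀, hy₀, hy₀1⟩⟩
  have hbdd : ∀ z : H →L[ℂ] H,
      BddBelow (Set.range fun y : {y // y ∈ B ∧ ‖y‖ = 1} => ‖z - (y : H →L[ℂ] H)‖) :=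
    fun z => ⟨0, by rintro r ⟨y, rfl⟩; positivity⟩
  have hbdd' : BddAbove (Set.range fun z : {x // x ∈ A ∧ ‖x‖ = 1} =>
      ⨅ y : {y // y ∈ B ∧ ‖y‖ = 1}, ‖(z : H →L[ℂ] H) - (y : H →L[ℂ] H)‖) := by
    refine ⟨2, ?_⟩
    rintro r ⟨⟨z, -, hz1⟩, rfl⟩
    refine ciInf_le_of_le (hbdd z) ⟨y₀, hy₀, hy₀1⟩ ((norm_sub_le _ _).trans ?_)
    rw [hz1, hy₀1]; norm_num
  obtain ⟨⟨y, hy, hy1⟩, hxy⟩ := exists_lt_of_ciInf_lt <|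
    (le_ciSup hbdd' ⟨x, hx, hx1⟩).trans_lt ((le_max_left _ _).trans_lt h)
  exact ⟨y, hy, hy1, hxy⟩

lemma StarSubalgebra.exists_near_of_dKK_lt {A₁ A₂ : StarSubalgebra ℂ (H →L[ℂ] H)} {δ : ℝ}
    (h : dKK (A₁ : Set (H →L[ℂ] H)) A₂ < δ) (x : A₁) :
    ∃ y : A₂, ‖y‖ = ‖x‖ ∧ ‖(y : H →L[ℂ] H) - x‖ ≤ δ * ‖x‖ := by
  rcases eq_or_ne x 0 with rfl | hx
  · exact ⟨0, by simp⟩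
  have hx' : (x : H →L[ℂ] H) ≠ 0 := by simpa using hx
  set c := ‖(x : H →L[ℂ] H)‖
  have hc : 0 < c := norm_pos_iff.mpr hx'
  have : Nontrivial (H →L[ℂ] H) := nontrivial_of_ne _ 0 hx'
  obtain ⟨y, hy, hy1, hxy⟩ := exists_norm_eq_one_sub_lt_of_dKK_lt ⟨1, one_mem A₂, norm_one⟩ h
    (SMulMemClass.smul_mem (c : ℂ)⁻¹ x.2) (by simp [norm_smul, c, hc.ne'])
  refine ⟨⟨(c : ℂ) • y, SMulMemClass.smul_mem _ hy⟩, by simp [norm_smul, hy1, c], ?_⟩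
  calc ‖(c : ℂ) • y - x‖ = ‖(c : ℂ) • (y - (c : ℂ)⁻¹ • (x : H →L[ℂ] H))‖ := by
        rw [smul_sub, smul_inv_smul₀ (by exact_mod_cast hc.ne')]
    _ = c * ‖(c : ℂ)⁻¹ • (x : H →L[ℂ] H) - y‖ := by
        rw [norm_smul, Complex.norm_of_nonneg hc.le, norm_sub_rev]
    _ ≤ δ * ‖x‖ := by rw [mul_comm]; exact mul_le_mul_of_nonneg_right hxy.le hc.le

lemma StarAlgEquiv.exists_near_of_dKK_lt {A : Type*} [CStarAlgebra A]
    {A₁ A₂ : StarSubalgebra ℂ (H →L[ℂ] H)} [IsClosed (A₁ : Set (H →L[ℂ] H))]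
    [IsClosed (A₂ : Set (H →L[ℂ] H))] (θ₁ : A ≃⋆ₐ[ℂ] A₁) (θ₂ : A ≃⋆ₐ[ℂ] A₂) {δ : ℝ}
    (h : dKK (A₁ : Set (H →L[ℂ] H)) A₂ < δ) (a : A) :
    ∃ b : A, ‖b‖ = ‖a‖ ∧ ‖(θ₂ b : H →L[ℂ] H) - θ₁ a‖ ≤ δ * ‖a‖ := by
  obtain ⟨y, hy, hya⟩ := StarSubalgebra.exists_near_of_dKK_lt h (θ₁ a)
  refine ⟨θ₂.symm y, ?_, ?_⟩
  · rw [StarAlgEquiv.norm_map, hy, StarAlgEquiv.norm_map]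
  · simpa [StarAlgEquiv.norm_map] using hya

theorem StarAlgEquiv.exists_isApproxStarIso_of_dKK_lt {A : Type*} [CStarAlgebra A]
    {A₁ A₂ : StarSubalgebra ℂ (H →L[ℂ] H)} [IsClosed (A₁ : Set (H →L[ℂ] H))]
    [IsClosed (A₂ : Set (H →L[ℂ] H))] (θ₁ : A ≃⋆ₐ[ℂ] A₁) (θ₂ : A ≃⋆ₐ[ℂ] A₂) {δ ε : ℝ}
    (hδ : 0 ≤ δ) (hε : 4 * δ ≤ ε) (h : dKK (A₁ : Set (H →L[ℂ] H)) A₂ < δ) :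
    ∃ g : A → A, IsApproxStarIso ε g ∧ ∀ a, ‖(θ₂ (g a) : H →L[ℂ] H) - θ₁ a‖ ≤ δ * ‖a‖ := by
  choose g hg_norm hg_near using θ₁.exists_near_of_dKK_lt θ₂ h
  let ι₁ : A →⋆ₙₐ[ℂ] H →L[ℂ] H := (A₁.subtype.comp (θ₁ : A →⋆ₐ[ℂ] A₁) : A →⋆ₐ[ℂ] _)
  let ι₂ : A →⋆ₙₐ[ℂ] H →L[ℂ] H := (A₂.subtype.comp (θ₂ : A →⋆ₐ[ℂ] A₂) : A →⋆ₐ[ℂ] _)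
  refine ⟨g, isApproxStarIso_of_near (ι₁ := ι₁) (ι₂ := ι₂)
    (StarAlgEquiv.norm_map θ₁) (StarAlgEquiv.norm_map θ₂) hδ hε hg_norm hg_near
    (θ₂.exists_near_of_dKK_lt θ₁ (dKK_comm (A₁ : Set (H →L[ℂ] H)) A₂ ▸ h)), hg_near⟩

end KadisonKastler

/-- If approximate *-isomorphisms of unital AF algebras can be uniformly corrected to
*-isomorphisms, then Kadison–Kastler close copies (in `B(H)`) of a unital AF algebra are
*-isomorphic via a map uniformly close to the identity. -/
theorem ulam_implies_kadisonKastler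
    (hUlam : ∀ ε : ℝ, 0 < ε → ∃ δ : ℝ, 0 < δ ∧
      ∀ (A : Type u) [NormedRing A] [StarRing A] [CStarRing A] [NormedAlgebra ℂ A]
        [StarModule ℂ A] [CompleteSpace A], IsAFAlgebra A →
        ∀ φ : A → A, IsApproxStarIso δ φ →
          ∃ ψ : A ≃⋆ₐ[ℂ] A, ∀ x : A, ‖x‖ ≤ 1 → ‖φ x - ψ x‖ < ε) :
    ∀ ε : ℝ, 0 < ε → ∃ δ : ℝ, 0 < δ ∧
      ∀ (A : Type u) (H : Type u)
        [NormedRing A] [StarRing A] [CStarRing A] [NormedAlgebra ℂ A]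
        [StarModule ℂ A] [CompleteSpace A]
        [NormedAddCommGroup H] [InnerProductSpace ℂ H] [CompleteSpace H],
        IsAFAlgebra A →
        ∀ A₁ A₂ : StarSubalgebra ℂ (H →L[ℂ] H),
          IsClosed (A₁ : Set (H →L[ℂ] H)) → IsClosed (A₂ : Set (H →L[ℂ] H)) →
          Nonempty (A ≃⋆ₐ[ℂ] A₁) → Nonempty (A ≃⋆ₐ[ℂ] A₂) →
          dKK (A₁ : Set (H →L[ℂ] H)) (A₂ : Set (H →L[ℂ] H)) < δ →
          ∃ φ : A₁ ≃⋆ₐ[ℂ] A₂, ∀ x : A₁, ‖(x : H →L[ℂ] H)‖ ≤ 1 →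
            ‖(φ x : H →L[ℂ] H) - (x : H →L[ℂ] H)‖ < ε := by
  intro ε hε
  obtain ⟨δ₀, hδ₀, hUlam⟩ := hUlam (ε / 2) (half_pos hε)
  obtain ⟨δ, hδ, hδδ₀, hδε⟩ : ∃ δ : ℝ, 0 < δ ∧ 4 * δ ≤ δ₀ ∧ δ ≤ ε / 2 :=
    ⟨min (δ₀ / 4) (ε / 2), by positivity, by linarith [min_le_left (δ₀ / 4) (ε / 2)],
      min_le_right _ _⟩
  refine ⟨δ, hδ, fun A H _ _ _ _ _ _ _ _ _ hA A₁ A₂ h₁ h₂ ⟨θ₁⟩ ⟨θ₂⟩ hd => ?_⟩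
  let _ : CStarAlgebra A := {}
  have : IsClosed (A₁ : Set (H →L[ℂ] H)) := h₁
  have : IsClosed (A₂ : Set (H →L[ℂ] H)) := h₂
  obtain ⟨g, hg, hg_near⟩ := θ₁.exists_isApproxStarIso_of_dKK_lt θ₂ hδ.le hδδ₀ hd
  obtain ⟨ψ, hψ⟩ := hUlam A hA g hg
  refine ⟨θ₁.symm.trans (ψ.trans θ₂), fun x hx => ?_⟩
  obtain ⟨a, rfl⟩ := EquivLike.surjective θ₁ x
  replace hx : ‖a‖ ≤ 1 := (StarAlgEquiv.norm_map θ₁ a).symm.trans_le hx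
  rw [StarAlgEquiv.trans_apply, StarAlgEquiv.trans_apply, StarAlgEquiv.symm_apply_apply]
  calc ‖(θ₂ (ψ a) : H →L[ℂ] H) - θ₁ a‖
      ≤ ‖(θ₂ (ψ a) : H →L[ℂ] H) - θ₂ (g a)‖ + ‖(θ₂ (g a) : H →L[ℂ] H) - θ₁ a‖ :=
        norm_sub_le_norm_sub_add_norm_sub _ _ _
    _ < ε / 2 + ε / 2 := by
        refine add_lt_add_of_lt_of_le ?_ ((hg_near a).trans ?_)
        · rw [← AddSubgroupClass.coe_sub, ← map_sub]
          exact (StarAlgEquiv.norm_map θ₂ _).trans_lt (norm_sub_rev (g a) _ ▸ hψ a hx)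
        · exact (mul_le_of_le_one_right hδ.le hx).trans hδε
    _ = ε := add_halves ε
end

section
/- Let 0 < ε₁ < 2⁻¹⁰ and define real sequences by δ₀ = ε₁, κ₀ = 2, δ_{n+1} = 2κ_n²δ_n², and κ_{n+1} = κ_n/(1 − κ_n²δ_n). Then for every n ∈ ℕ: κ_n²δ_n < 1 (so the recursion is well defined), κ_{n+1} − κ_n < 2^{−n}, δ_n ≤ 2^{5(1 − 2ⁿ)}·ε₁, and κ_n < 4; moreover ∑_{n=0}^{∞} κ_n δ_n < 8ε₁. -/
/-!
Write `xₙ = κₙ² δₙ`. As long as `κₙ ≤ 4`, the recursion gives `δₙ₊₁ ≤ 32 δₙ²`, and the bound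
`bₙ = 2^{5(1-2ⁿ)} ε₁` satisfies exactly `bₙ₊₁ = bₙ² / (32 ε₁)`, so `ε₁ ≤ 2⁻¹⁰` makes `δₙ ≤ bₙ`
inductive. Since `bₙ ≤ 32⁻ⁿ ε₁`, the `xₙ` are tiny, and `κₙ₊₁ - κₙ = κₙ xₙ / (1 - xₙ) ≤ 8 xₙ`
is summable with total far below `2`, which keeps `κₙ ≤ 4 - 2⁻ⁿ`. The series `∑ κₙ δₙ` is then
dominated by the geometric series `∑ 4 ε₁ 32⁻ⁿ = 128 ε₁ / 31`.
-/

lemma thirty_two_mul_two_zpow_five_mul_one_sub_two_pow_succ (n : ℕ) :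
    32 * (2 : ℝ) ^ ((5 * (1 - 2 ^ (n + 1)) : ℤ)) = ((2 : ℝ) ^ ((5 * (1 - 2 ^ n) : ℤ))) ^ 2 := by
  rw [← zpow_natCast, ← zpow_mul, show (32 : ℝ) = 2 ^ (5 : ℤ) by norm_num,
    ← zpow_add₀ two_ne_zero]
  congr 1
  push_cast
  ring

lemma two_zpow_five_mul_one_sub_two_pow_le (n : ℕ) :
    (2 : ℝ) ^ ((5 * (1 - 2 ^ n) : ℤ)) ≤ (1 / 32) ^ n := by
  induction n with
  | zero => norm_num
  | succ n ih =>
    have hsq := thirty_two_mul_two_zpow_five_mul_one_sub_two_pow_succ n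
    set c := (2 : ℝ) ^ ((5 * (1 - 2 ^ n) : ℤ))
    have hc : 0 ≤ c := by positivity
    have hc1 : c ≤ 1 := ih.trans (pow_le_one₀ (by norm_num) (by norm_num))
    rw [pow_succ (1 / 32 : ℝ)]
    nlinarith

lemma div_one_sub_le_add_two_mul {K : Type*} [Field K] [LinearOrder K] [IsStrictOrderedRing K]
    {a x : K} (ha : 0 ≤ a) (hx₀ : 0 ≤ x) (hx : x ≤ 1 / 2) : a / (1 - x) ≤ a + 2 * a * x := by
  rw [div_le_iff₀ (by linarith)]
  nlinarith [mul_nonneg ha hx₀]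

structure RecursionBounds (ε δ κ : ℝ) (n : ℕ) : Prop where
  delta_nonneg : 0 ≤ δ
  delta_le : δ ≤ (2 : ℝ) ^ ((5 * (1 - 2 ^ n) : ℤ)) * ε
  two_le_kappa : 2 ≤ κ
  kappa_le : κ ≤ 4 - (1 / 2) ^ n

namespace RecursionBounds

variable {ε δ κ : ℝ} {n : ℕ}

lemma kappa_lt_four (h : RecursionBounds ε δ κ n) : κ < 4 := by
  linarith [h.kappa_le, pow_pos (one_half_pos : (0 : ℝ) < 1 / 2) n]

lemma kappa_sq_le (h : RecursionBounds ε δ κ n) : κ ^ 2 ≤ 16 := by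
  nlinarith [h.two_le_kappa, h.kappa_lt_four]

lemma delta_le_geometric (h : RecursionBounds ε δ κ n) (hε : 0 ≤ ε) : δ ≤ (1 / 32) ^ n * ε :=
  h.delta_le.trans (mul_le_mul_of_nonneg_right (two_zpow_five_mul_one_sub_two_pow_le n) hε)

lemma kappa_mul_delta_le (h : RecursionBounds ε δ κ n) (hε : 0 ≤ ε) :
    κ * δ ≤ 4 * ε * (1 / 32) ^ n := by
  have := h.delta_le_geometric hε
  nlinarith [h.kappa_lt_four, h.delta_nonneg, h.two_le_kappa]

lemma kappa_sq_mul_delta_le (h : RecursionBounds ε δ κ n) (hε : 0 ≤ ε) (hε' : ε ≤ 1 / 1024) :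
    κ ^ 2 * δ ≤ (1 / 32) ^ n / 64 := by
  have hδ := h.delta_le_geometric hε
  have := mul_le_mul_of_nonneg_left hε' (pow_nonneg (by norm_num : (0 : ℝ) ≤ 1 / 32) n)
  nlinarith [h.kappa_sq_le, h.delta_nonneg, sq_nonneg κ]

lemma kappa_sq_mul_delta_nonneg (h : RecursionBounds ε δ κ n) : 0 ≤ κ ^ 2 * δ :=
  mul_nonneg (sq_nonneg κ) h.delta_nonneg

lemma kappa_sq_mul_delta_le_half (h : RecursionBounds ε δ κ n) (hε : 0 ≤ ε)
    (hε' : ε ≤ 1 / 1024) : κ ^ 2 * δ ≤ 1 / 2 := by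
  linarith [h.kappa_sq_mul_delta_le hε hε', pow_le_one₀ (by norm_num : (0 : ℝ) ≤ 1 / 32)
    (by norm_num : (1 / 32 : ℝ) ≤ 1) (n := n)]

lemma kappa_increment_le (h : RecursionBounds ε δ κ n) (hε : 0 ≤ ε) (hε' : ε ≤ 1 / 1024) :
    κ / (1 - κ ^ 2 * δ) - κ ≤ (1 / 2) ^ n / 8 := by
  have hdiv := div_one_sub_le_add_two_mul (a := κ) (by linarith [h.two_le_kappa])
    h.kappa_sq_mul_delta_nonneg (h.kappa_sq_mul_delta_le_half hε hε')
  have hpow : ((1 : ℝ) / 32) ^ n ≤ (1 / 2) ^ n := pow_le_pow_left₀ (by norm_num) (by norm_num) n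
  nlinarith [h.kappa_sq_mul_delta_le hε hε', h.kappa_sq_mul_delta_nonneg, h.kappa_lt_four]

lemma succ (h : RecursionBounds ε δ κ n) (hε : 0 ≤ ε) (hε' : ε ≤ 1 / 1024) :
    RecursionBounds ε (2 * κ ^ 2 * δ ^ 2) (κ / (1 - κ ^ 2 * δ)) (n + 1) where
  delta_nonneg := by have := h.delta_nonneg; positivity
  delta_le := by
    set c := (2 : ℝ) ^ ((5 * (1 - 2 ^ n) : ℤ))
    have hc := thirty_two_mul_two_zpow_five_mul_one_sub_two_pow_succ n
    have hδ : δ ^ 2 ≤ (c * ε) ^ 2 := pow_le_pow_left₀ h.delta_nonneg h.delta_le 2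
    have hε2 : ε ^ 2 ≤ ε / 1024 := by nlinarith
    calc 2 * κ ^ 2 * δ ^ 2 ≤ 32 * (c * ε) ^ 2 := by nlinarith [h.kappa_sq_le, sq_nonneg δ]
      _ = 32 * c ^ 2 * ε ^ 2 := by ring
      _ ≤ 32 * c ^ 2 * (ε / 1024) := by gcongr
      _ = _ := by rw [← hc]; ring
  two_le_kappa := h.two_le_kappa.trans <| le_div_self (by linarith [h.two_le_kappa])
    (by linarith [h.kappa_sq_mul_delta_le_half hε hε'])
    (by linarith [h.kappa_sq_mul_delta_nonneg])
  kappa_le := by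
    rw [pow_succ (1 / 2 : ℝ) n]
    linarith [h.kappa_increment_le hε hε', h.kappa_le, pow_pos (one_half_pos : (0 : ℝ) < 1 / 2) n]

end RecursionBounds

lemma exists_hasSum_le_of_le_geometric {f : ℕ → ℝ} {a r : ℝ} (hf₀ : ∀ n, 0 ≤ f n)
    (hf : ∀ n, f n ≤ a * r ^ n) (hr₀ : 0 ≤ r) (hr : r < 1) :
    ∃ S, HasSum f S ∧ S ≤ a * (1 - r)⁻¹ := by
  have hg : HasSum (fun n ↦ a * r ^ n) (a * (1 - r)⁻¹) :=
    (hasSum_geometric_of_lt_one hr₀ hr).mul_left a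
  have hsum : Summable f := Summable.of_nonneg_of_le hf₀ hf hg.summable
  exact ⟨_, hsum.hasSum, hasSum_le hf hsum.hasSum hg⟩

/-- The estimates on the recursively defined sequences `δ_n`, `κ_n` appearing in the
proof of the main theorem: `κ_n² δ_n < 1` (so the recursion is well defined),
`κ_{n+1} - κ_n < 2⁻ⁿ`, `δ_n ≤ 2^{5(1-2ⁿ)} ε₁`, `κ_n < 4`, and `∑ κ_n δ_n < 8 ε₁`. -/
theorem recursive_sequence_estimates (ε₁ : ℝ) (hε₁ : 0 < ε₁) (hε₁' : ε₁ < (2 : ℝ) ^ (-10 : ℤ))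
    (δ κ : ℕ → ℝ) (hδ0 : δ 0 = ε₁) (hκ0 : κ 0 = 2)
    (hδ : ∀ n : ℕ, δ (n + 1) = 2 * κ n ^ 2 * δ n ^ 2)
    (hκ : ∀ n : ℕ, κ (n + 1) = κ n / (1 - κ n ^ 2 * δ n)) :
    (∀ n : ℕ, κ n ^ 2 * δ n < 1) ∧
    (∀ n : ℕ, κ (n + 1) - κ n < (2 : ℝ) ^ (-(n : ℤ))) ∧
    (∀ n : ℕ, δ n ≤ (2 : ℝ) ^ ((5 * (1 - 2 ^ n) : ℤ)) * ε₁) ∧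
    (∀ n : ℕ, κ n < 4) ∧
    (∃ S : ℝ, HasSum (fun n : ℕ => κ n * δ n) S ∧ S < 8 * ε₁) := by
  have hε : ε₁ ≤ 1 / 1024 := by norm_num at hε₁'; linarith
  have hb : ∀ n, RecursionBounds ε₁ (δ n) (κ n) n := by
    intro n
    induction n with
    | zero =>
      exact ⟨by rw [hδ0]; exact hε₁.le, by rw [hδ0]; norm_num, hκ0.ge, by rw [hκ0]; norm_num⟩
    | succ n ih => rw [hδ, hκ]; exact ih.succ hε₁.le hε
  refine ⟨fun n ↦ by linarith [(hb n).kappa_sq_mul_delta_le_half hε₁.le hε],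
    fun n ↦ ?_, fun n ↦ (hb n).delta_le, fun n ↦ (hb n).kappa_lt_four, ?_⟩
  · rw [hκ, zpow_neg, zpow_natCast, ← inv_pow, ← one_div]
    linarith [(hb n).kappa_increment_le hε₁.le hε, pow_pos (one_half_pos : (0 : ℝ) < 1 / 2) n]
  · obtain ⟨S, hS, hSle⟩ := exists_hasSum_le_of_le_geometric
      (fun n ↦ mul_nonneg (by linarith [(hb n).two_le_kappa]) (hb n).delta_nonneg)
      (fun n ↦ (hb n).kappa_mul_delta_le hε₁.le) (by norm_num) (by norm_num)
    exact ⟨S, hS, by linarith⟩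
end

section
/- Let 0 < ε < 1/100, let A and B be C*-algebras, and let φ : A → B be an ε-*-homomorphism satisfying ‖φ(x)‖ ≤ 1 for every x in the closed unit ball of A. Then for every projection p ∈ A (i.e. p = p* = p²), either ‖φ(p)‖ ≤ 2√ε or ‖φ(p)‖ ≥ 1/2. -/
universe u v

/-- For `0 < ε < 1/100` and a contractive `ε`-*-homomorphism `φ`, the image of any
projection has norm either at most `2√ε` or at least `1/2`. -/
theorem projection_norm_dichotomy {A : Type u} {B : Type v}
    [NonUnitalNormedRing A] [StarRing A] [CStarRing A] [NormedSpace ℂ A]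
    [IsScalarTower ℂ A A] [SMulCommClass ℂ A A] [StarModule ℂ A] [CompleteSpace A]
    [NonUnitalNormedRing B] [StarRing B] [CStarRing B] [NormedSpace ℂ B]
    [IsScalarTower ℂ B B] [SMulCommClass ℂ B B] [StarModule ℂ B] [CompleteSpace B]
    (ε : ℝ) (hε0 : 0 < ε) (hε : ε < 1 / 100)
    (φ : A → B) (hφ : IsApproxStarHom ε φ)
    (hcontr : ∀ x : A, ‖x‖ ≤ 1 → ‖φ x‖ ≤ 1) :
    ∀ p : A, star p = p → p * p = p →
      ‖φ p‖ ≤ 2 * Real.sqrt ε ∨ (1 : ℝ) / 2 ≤ ‖φ p‖ := by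
  intro p hstar hidem
  -- ‖p‖ ≤ 1
  have hnormp : ‖p‖ ≤ 1 := by
    have h1 : ‖p‖ * ‖p‖ = ‖p‖ := by
      rw [← CStarRing.norm_star_mul_self, hstar, hidem]
    rcases eq_or_ne ‖p‖ 0 with h | h
    · simp [h]
    · nlinarith [norm_nonneg p]
  set t := ‖φ p‖ with ht
  by_cases h : (1 : ℝ) / 2 ≤ t
  · exact Or.inr h
  push_neg at h
  left
  have hmul := hφ.2.2.1 p p hnormp hnormp
  rw [hidem] at hmul
  have ht0 : 0 ≤ t := norm_nonneg _
  have hsq : ‖φ p * φ p‖ ≤ t * t := norm_mul_le _ _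
  have key : t ≤ t * t + ε := by
    calc t = ‖(φ p - φ p * φ p) + φ p * φ p‖ := by rw [sub_add_cancel]
      _ ≤ ‖φ p - φ p * φ p‖ + ‖φ p * φ p‖ := norm_add_le _ _
      _ ≤ ε + t * t := add_le_add hmul hsq
      _ = t * t + ε := by ring
  have h2ε : t ≤ 2 * ε := by nlinarith
  have hsqrt : ε ≤ Real.sqrt ε := by
    nlinarith [Real.sq_sqrt hε0.le, Real.sqrt_nonneg ε, Real.sqrt_le_one.mpr (by linarith : ε ≤ 1)]
  linarith
end

section
/- Let A and B be unital C*-algebras, let 0 < ε < 1/2, and let φ : A → B be an ε-*-homomorphism with φ(1) = 1 and ‖φ(x)‖ ≤ 1 for every x in the closed unit ball of A. Then for every unitary u ∈ A, the element φ(u) is invertible in B and ‖φ(u)⁻¹‖ ≤ 2. -/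
/-- Norm bound for the inverse of a small perturbation of `1`. -/
lemma aux_norm_inverse_one_sub_le {R : Type*} [NormedRing R] [NormOneClass R]
    [CompleteSpace R] {t : R} (h : ‖t‖ < 1) :
    ‖Ring.inverse (1 - t)‖ ≤ (1 - ‖t‖)⁻¹ := by
  rw [← geom_series_eq_inverse t h]
  exact tsum_of_norm_bounded (hasSum_geometric_of_lt_one (norm_nonneg t) h)
    (fun n => norm_pow_le t n)

universe u v

/-- If `φ` is a unital contractive `ε`-*-homomorphism between unital C*-algebras with
`ε < 1/2`, then `φ(u)` is invertible with `‖φ(u)⁻¹‖ ≤ 2` for every unitary `u`. -/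
theorem approx_hom_unitary_invertible {A : Type u} {B : Type v}
    [NormedRing A] [StarRing A] [CStarRing A] [NormedAlgebra ℂ A]
    [StarModule ℂ A] [CompleteSpace A]
    [NormedRing B] [StarRing B] [CStarRing B] [NormedAlgebra ℂ B]
    [StarModule ℂ B] [CompleteSpace B]
    (ε : ℝ) (hε0 : 0 < ε) (hε : ε < 1 / 2)
    (φ : A → B) (hφ : IsApproxStarHom ε φ) (hunital : φ 1 = 1)
    (hcontr : ∀ x : A, ‖x‖ ≤ 1 → ‖φ x‖ ≤ 1) :
    ∀ u : A, u ∈ unitary A → IsUnit (φ u) ∧ ‖Ring.inverse (φ u)‖ ≤ 2 := by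
  intro u hu
  rcases subsingleton_or_nontrivial B with hB | hB
  · refine ⟨isUnit_of_subsingleton _, ?_⟩
    rw [Subsingleton.elim (Ring.inverse (φ u)) 0, norm_zero]; norm_num
  rcases subsingleton_or_nontrivial A with hA | hA
  · rw [Subsingleton.elim u 1, hunital]
    simp
  have hun : ‖u‖ ≤ 1 := le_of_eq (CStarRing.norm_of_mem_unitary hu)
  have hsn : ‖star u‖ ≤ 1 := by rwa [norm_star]
  have hmem := Unitary.mem_iff.mp hu
  set v := φ u with hv
  set w := φ (star u) with hw
  have h1 : ‖1 - v * w‖ ≤ ε := by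
    have := hφ.2.2.1 u (star u) hun hsn
    rwa [hmem.2, hunital] at this
  have h2 : ‖1 - w * v‖ ≤ ε := by
    have := hφ.2.2.1 (star u) u hsn hun
    rwa [hmem.1, hunital] at this
  have hε1 : ε < 1 := by linarith
  have h1' : ‖1 - v * w‖ < 1 := lt_of_le_of_lt h1 hε1
  have h2' : ‖1 - w * v‖ < 1 := lt_of_le_of_lt h2 hε1
  have hvw : IsUnit (v * w) := by
    have := isUnit_one_sub_of_norm_lt_one h1'
    simpa using this
  have hwv : IsUnit (w * v) := by
    have := isUnit_one_sub_of_norm_lt_one h2'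
    simpa using this
  set r := Ring.inverse (v * w) with hr
  set l := Ring.inverse (w * v) with hl
  have hrr : (v * w) * r = 1 := Ring.mul_inverse_cancel _ hvw
  have hll : l * (w * v) = 1 := Ring.inverse_mul_cancel _ hwv
  have hright : v * (w * r) = 1 := by rw [← mul_assoc]; exact hrr
  have hleft : (l * w) * v = 1 := by rw [mul_assoc]; exact hll
  have heq : l * w = w * r := by
    calc l * w = (l * w) * (v * (w * r)) := by rw [hright, mul_one]
    _ = ((l * w) * v) * (w * r) := by rw [mul_assoc (l*w) v (w*r)]
    _ = w * r := by rw [hleft, one_mul]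
  have hunit : IsUnit v := ⟨⟨v, w * r, hright, by rw [← heq]; exact hleft⟩, rfl⟩
  refine ⟨hunit, ?_⟩
  have hinv : Ring.inverse v = w * r :=
    Ring.inverse_unit ⟨v, w * r, hright, by rw [← heq]; exact hleft⟩
  rw [hinv]
  have hwnorm : ‖w‖ ≤ 1 := hcontr (star u) hsn
  have hrnorm : ‖r‖ ≤ (1 - ‖1 - v * w‖)⁻¹ := by
    have : Ring.inverse (v * w) = Ring.inverse (1 - (1 - v * w)) := by rw [sub_sub_cancel]
    rw [hr, this]
    exact aux_norm_inverse_one_sub_le h1'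
  have h2le : (1 - ‖1 - v * w‖)⁻¹ ≤ 2 := by
    rw [inv_le_iff_one_le_mul₀ (by linarith)]
    nlinarith [norm_nonneg (1 - v * w)]
  calc ‖w * r‖ ≤ ‖w‖ * ‖r‖ := norm_mul_le _ _
  _ ≤ 1 * 2 := by
    exact mul_le_mul hwnorm (hrnorm.trans h2le) (norm_nonneg _) zero_le_one
  _ = 2 := by norm_num
end
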